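/- For integers n ≥ 1 and p ≥ 1, let L be the set of vertices v = (v_1,…,v_n) of the Sierpiński graph S_p^n such that either v_n = 0, or there exist l with 2 ≤ l ≤ n and a < b in {0,…,p-1} such that v_{n-l+1} = a and v_{n-l+2} = ⋯ = v_n = b. Then the sequence listing the vertices of L in lexicographic order (of their coordinate tuples) is a legal dominating sequence of S_p^n; in particular it is a Grundy dominating sequence of S_p^n. -/

import Mathlib

/-- The closed neighborhood `N[v] = {v} ∪ N(v)` of a vertex. -/
def closedNbhd {V : Type*} (G : SimpleGraph V) (v : V) : Set V :=
  insert v (G.neighborSet v)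

/-- A sequence (list) of pairwise distinct vertices is legal if each vertex
footprints some vertex not dominated by the previous ones. -/
def IsLegalSeq {V : Type*} (G : SimpleGraph V) (l : List V) : Prop :=
  l.Nodup ∧ ∀ i : Fin l.length, ∃ u,
    u ∈ closedNbhd G (l.get i) ∧
    ∀ j : Fin l.length, (j : ℕ) < (i : ℕ) → u ∉ closedNbhd G (l.get j)

/-- A legal dominating sequence. -/
def IsDomSeq {V : Type*} (G : SimpleGraph V) (l : List V) : Prop :=
  IsLegalSeq G l ∧ ∀ u : V, ∃ v ∈ l, u ∈ closedNbhd G v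

/-- The Grundy domination number: the maximum length of a legal dominating sequence. -/
noncomputable def grundyDomNum {V : Type*} (G : SimpleGraph V) : ℕ :=
  sSup {k : ℕ | ∃ l : List V, IsDomSeq G l ∧ l.length = k}

/-- The Sierpiński graph `S_p^n` on vertex set `{0,…,p-1}^n`: two distinct vertices
`u` and `v` are adjacent iff there is a coordinate `h` with `u t = v t` for `t < h`,
`u h ≠ v h`, and `u t = v h`, `v t = u h` for all `t > h`. -/
def sierpinskiGraph (p n : ℕ) : SimpleGraph (Fin n → Fin p) :=
  SimpleGraph.fromRel (fun u v => ∃ h : Fin n,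
    (∀ t : Fin n, t < h → u t = v t) ∧ u h ≠ v h ∧
    (∀ t : Fin n, h < t → u t = v h ∧ v t = u h))

/-- The set `L` of vertices `v` of `S_p^n` such that the last bit of `v` is `0`, or
`v = ⟨x_1 … x_{n-l} a b^{l-1}⟩` for some `2 ≤ l ≤ n` and `a < b`. -/
def sierpLexSet (p n : ℕ) (hn : 1 ≤ n) : Set (Fin n → Fin p) :=
  {v | (v ⟨n - 1, by omega⟩).val = 0 ∨
    ∃ l, ∃ _ : 2 ≤ l, ∃ _ : l ≤ n, ∃ a b : Fin p, a < b ∧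
      v ⟨n - l, by omega⟩ = a ∧
      ∀ i : Fin n, n - l + 1 ≤ i.val → v i = b}

/-- The (strict) lexicographic order on vertices of `S_p^n`. -/
def lexLt {p n : ℕ} (u v : Fin n → Fin p) : Prop :=
  ∃ i : Fin n, (∀ j : Fin n, j < i → u j = v j) ∧ u i < v i

/-!
The vertices of `S_p^n` that agree off the last coordinate form a copy of `K_p`, and every other
edge is a bridge `x a bᵏ — x b aᵏ` (`a ≠ b`, `k ≥ 1`) between two such copies; a vertex lies on at
most one bridge. `L` consists of one vertex per copy (the one ending in `0`) and the lower end
`x a bᵏ` (`a < b`) of every bridge. In a legal sequence each vertex `s` footprints some `u`, and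
the pair `(s, u)` lies in a copy or on a bridge; no copy or bridge can contain two such pairs, so
no legal sequence is longer than `L`. Conversely, in lexicographic order, a vertex `v` ending in
`0` footprints `v` with last coordinate `p - 1`, and the lower end of a bridge footprints its upper
end.
-/

section GrundyDomination

variable {V : Type*} {G : SimpleGraph V}

theorem isLegalSeq_of_pairwise {r : V → V → Prop} {l : List V} (hirr : ∀ v, ¬ r v v)
    (hsorted : l.Pairwise r)
    (hpriv : ∀ v ∈ l, ∃ u ∈ closedNbhd G v, ∀ w, r w v → u ∉ closedNbhd G w) :
    IsLegalSeq G l := by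
  have : Std.Irrefl r := ⟨hirr⟩
  refine ⟨hsorted.nodup, fun i => ?_⟩
  obtain ⟨u, hu, hnot⟩ := hpriv _ (l.get_mem i)
  exact ⟨u, hu, fun j hji => hnot _ (List.pairwise_iff_get.mp hsorted j i hji)⟩

theorem IsLegalSeq.length_le_card {l : List V} (hl : IsLegalSeq G l) (L : Finset V)
    (R : V → V → V → Prop) (hR : ∀ s u, u ∈ closedNbhd G s → ∃ e ∈ L, R s u e)
    (hcoll : ∀ s u s' u' e,
      u ∈ closedNbhd G s → R s u e → R s' u' e → u' ∈ closedNbhd G s) :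
    l.length ≤ L.card := by
  obtain ⟨-, hfoot⟩ := hl
  choose u hu hpriv using hfoot
  choose e heL heR using fun i => hR _ _ (hu i)
  have hinj : Function.Injective e := by
    intro i j hij
    by_contra hne
    rcases Fin.lt_or_lt_of_ne hne with hlt | hlt
    · exact hpriv j i hlt (hcoll _ _ _ _ _ (hu i) (heR i) (hij ▸ heR j))
    · exact hpriv i j hlt (hcoll _ _ _ _ _ (hu j) (heR j) (hij ▸ heR i))
  simpa using Finset.card_le_card_of_injOn (s := Finset.univ) e (fun i _ => heL i) hinj.injOn

theorem grundyDomNum_eq_of_isDomSeq {l : List V} (hl : IsDomSeq G l)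
    (hmax : ∀ s, IsLegalSeq G s → s.length ≤ l.length) : grundyDomNum G = l.length :=
  IsGreatest.csSup_eq ⟨⟨l, hl, rfl⟩, by rintro _ ⟨s, hs, rfl⟩; exact hmax s hs.1⟩

end GrundyDomination

namespace SierpinskiGraph

variable {p n : ℕ}

def AdjAt (h : Fin n) (u v : Fin n → Fin p) : Prop :=
  (∀ t, t < h → u t = v t) ∧ u h ≠ v h ∧ ∀ t, h < t → u t = v h ∧ v t = u h

theorem AdjAt.symm {h : Fin n} {u v : Fin n → Fin p} (huv : AdjAt h u v) : AdjAt h v u :=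
  ⟨fun t ht => (huv.1 t ht).symm, huv.2.1.symm, fun t ht => (huv.2.2 t ht).symm⟩

theorem mem_closedNbhd_iff {u v : Fin n → Fin p} :
    u ∈ closedNbhd (sierpinskiGraph p n) v ↔ u = v ∨ ∃ h, AdjAt h u v := by
  simp only [closedNbhd, sierpinskiGraph, Set.mem_insert_iff, SimpleGraph.mem_neighborSet,
    SimpleGraph.fromRel_adj]
  refine or_congr_right ⟨fun ⟨_, hvu⟩ => ?_,
    fun ⟨h, huv⟩ => ⟨fun he => huv.2.1 (by rw [he]), Or.inr ⟨h, huv⟩⟩⟩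
  rcases hvu with ⟨h, hvu⟩ | huv
  exacts [⟨h, AdjAt.symm hvu⟩, huv]

theorem lexLt_irrefl (u : Fin n → Fin p) : ¬ lexLt u u :=
  fun ⟨_, _, hlt⟩ => lt_irrefl _ hlt

theorem apply_lt_apply_of_lexLt {w v : Fin n → Fin p} {k : Fin n} (hwv : lexLt w v)
    (hagree : ∀ t < k, w t = v t) (hk : w k ≠ v k) : w k < v k := by
  obtain ⟨i, hi, hlt⟩ := hwv
  rcases lt_trichotomy i k with hik | rfl | hki
  · exact absurd (hagree i hik) hlt.ne
  · exact hlt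
  · exact absurd (hi k hki) hk

variable [NeZero n]

theorem eq_of_forall_lt_top {u v : Fin n → Fin p} (h : ∀ t < ⊤, u t = v t)
    (htop : u ⊤ = v ⊤) : u = v := by
  funext t
  rcases (le_top : t ≤ ⊤).lt_or_eq with ht | rfl
  exacts [h t ht, htop]

theorem mem_closedNbhd_of_forall_lt_top {u v : Fin n → Fin p} (h : ∀ t < ⊤, u t = v t) :
    u ∈ closedNbhd (sierpinskiGraph p n) v :=
  mem_closedNbhd_iff.2 <| or_iff_not_imp_left.2 fun hne =>
    ⟨⊤, h, fun htop => hne (eq_of_forall_lt_top h htop), fun _ ht => absurd ht not_top_lt⟩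

theorem AdjAt.apply_top {h : Fin n} {u v : Fin n → Fin p} (huv : AdjAt h u v) (hh : h < ⊤) :
    u ⊤ = v h :=
  (huv.2.2 ⊤ hh).1

theorem AdjAt.index_eq {h h' : Fin n} {e x y : Fin n → Fin p} (hx : AdjAt h e x)
    (hy : AdjAt h' e y) (hh : h < ⊤) (hh' : h' < ⊤) : h = h' := by
  -- `h` is the last coordinate at which `e` differs from `e ⊤`
  have no_lt : ∀ {h h' x y},
      AdjAt h e x → AdjAt h' e y → h < ⊤ → h' < ⊤ → ¬ h < h' :=
    fun hx hy hh hh' hlt =>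
      hy.2.1 ((hx.2.2 _ hlt).1.trans ((hx.apply_top hh).symm.trans (hy.apply_top hh')))
  exact le_antisymm (not_lt.1 (no_lt hy hx hh' hh)) (not_lt.1 (no_lt hx hy hh hh'))

theorem AdjAt.right_unique {h : Fin n} {e x y : Fin n → Fin p} (hx : AdjAt h e x)
    (hy : AdjAt h e y) (hh : h < ⊤) : x = y := by
  funext t
  rcases lt_trichotomy t h with ht | rfl | ht
  · exact (hx.1 t ht).symm.trans (hy.1 t ht)
  · exact (hx.apply_top hh).symm.trans (hy.apply_top hh)
  · exact (hx.2.2 t ht).2.trans (hy.2.2 t ht).2.symm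

/-- `e = w a bᵏ` and `f = w b aᵏ` with `a < b` and `k ≥ 1`. -/
def IsLowBridge (e f : Fin n → Fin p) : Prop :=
  ∃ h < ⊤, AdjAt h e f ∧ e h < f h

theorem IsLowBridge.unique {e x y : Fin n → Fin p} (hx : IsLowBridge e x)
    (hy : IsLowBridge e y) : x = y := by
  obtain ⟨h, hh, hx, -⟩ := hx
  obtain ⟨h', hh', hy, -⟩ := hy
  obtain rfl := hx.index_eq hy hh hh'
  exact hx.right_unique hy hh

theorem exists_isLowBridge_iff {v : Fin n → Fin p} :
    (∃ x, IsLowBridge v x) ↔ ∃ h < ⊤, v h < v ⊤ ∧ ∀ t, h < t → v t = v ⊤ := by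
  constructor
  · rintro ⟨x, h, hh, hvx, hlt⟩
    exact ⟨h, hh, hvx.apply_top hh ▸ hlt,
      fun t ht => (hvx.2.2 t ht).1.trans (hvx.apply_top hh).symm⟩
  · rintro ⟨h, hh, hlt, htail⟩
    refine ⟨fun t => if t < h then v t else if t = h then v ⊤ else v h, h, hh,
      ⟨fun t ht => by simp [ht], ?_, fun t ht => ?_⟩, ?_⟩
    · simpa using hlt.ne
    · simp [htail t ht, ht.not_gt, ht.ne']
    · simpa using hlt

theorem mem_sierpLexSet_iff [NeZero p] (hn : 1 ≤ n) {v : Fin n → Fin p} :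
    v ∈ sierpLexSet p n hn ↔ v ⊤ = 0 ∨ ∃ x, IsLowBridge v x := by
  rw [exists_isLowBridge_iff]
  refine or_congr Fin.val_eq_zero_iff ⟨?_, ?_⟩
  · rintro ⟨l, hl2, hln, a, b, hab, ha, hb⟩
    have htop : v ⊤ = b := hb ⊤ (by simp [Fin.val_top]; omega)
    refine ⟨⟨n - l, by omega⟩, Fin.lt_def.2 (by simp [Fin.val_top]; omega), ?_,
      fun t ht => ?_⟩
    · rw [ha, htop]; exact hab
    · rw [htop]; exact hb t (Fin.lt_def.1 ht)
  · rintro ⟨h, hh, hlt, htail⟩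
    have hh' : (h : ℕ) < n - 1 := Fin.lt_def.1 hh
    refine ⟨n - h, by omega, by omega, v h, v ⊤, hlt, congrArg v (Fin.ext (by simp; omega)),
      fun t ht => htail t (Fin.lt_def.2 (by omega))⟩

theorem exists_private_of_top_eq_zero [NeZero p] {v : Fin n → Fin p} (hv : v ⊤ = 0) :
    ∃ u ∈ closedNbhd (sierpinskiGraph p n) v,
      ∀ w, lexLt w v → u ∉ closedNbhd (sierpinskiGraph p n) w := by
  have hupd : ∀ t < ⊤, Function.update v ⊤ ⊤ t = v t :=
    fun t ht => Function.update_of_ne ht.ne _ _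
  refine ⟨Function.update v ⊤ ⊤, mem_closedNbhd_of_forall_lt_top hupd, fun w hwv hu => ?_⟩
  have same_copy : (∀ t < ⊤, w t = v t) → False := fun hagree => by
    have := apply_lt_apply_of_lexLt hwv hagree fun htop =>
      lexLt_irrefl v (eq_of_forall_lt_top hagree htop ▸ hwv)
    exact Fin.not_lt_zero _ (hv ▸ this)
  rcases mem_closedNbhd_iff.1 hu with rfl | ⟨h, hh⟩
  · exact same_copy hupd
  rcases (le_top : h ≤ ⊤).lt_or_eq with hlt | rfl
  · have hwh : w h = ⊤ := (hh.apply_top hlt).symm.trans (Function.update_self ..)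
    have hne : w h ≠ v h := fun heq => hh.2.1 (by rw [hupd h hlt, heq])
    have := apply_lt_apply_of_lexLt hwv
      (fun t ht => (hh.1 t ht).symm.trans (hupd t (ht.trans hlt))) hne
    exact not_top_lt (hwh ▸ this)
  · exact same_copy fun t ht => (hh.1 t ht).symm.trans (hupd t ht)

theorem IsLowBridge.exists_private {v x : Fin n → Fin p} (hvx : IsLowBridge v x) :
    ∃ u ∈ closedNbhd (sierpinskiGraph p n) v,
      ∀ w, lexLt w v → u ∉ closedNbhd (sierpinskiGraph p n) w := by
  obtain ⟨h₀, hh₀, hvx, hlt⟩ := hvx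
  refine ⟨x, mem_closedNbhd_iff.2 (Or.inr ⟨h₀, hvx.symm⟩), fun w hwv hxw => ?_⟩
  have above : (∀ t < h₀, w t = x t) → w h₀ = x h₀ → False := fun hbefore hat => by
    have := apply_lt_apply_of_lexLt hwv
      (fun t ht => (hbefore t ht).trans (hvx.1 t ht).symm) (hat ▸ hlt.ne')
    exact (hat ▸ hlt).not_gt this
  rcases mem_closedNbhd_iff.1 hxw with rfl | ⟨h, hh⟩
  · exact above (fun _ _ => rfl) rfl
  rcases lt_trichotomy h h₀ with hlt' | rfl | hgt
  · -- both `x h₀` and `x ⊤` equal `w h`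
    exact hvx.2.1 ((hvx.2.2 ⊤ hh₀).2.symm.trans
      ((hh.apply_top (hlt'.trans hh₀)).trans (hh.2.2 h₀ hlt').1.symm))
  · suffices w = v from lexLt_irrefl v (this ▸ hwv)
    funext t
    rcases lt_trichotomy t h with ht | rfl | ht
    · exact (hh.1 t ht).symm.trans (hvx.1 t ht).symm
    · exact (hh.apply_top hh₀).symm.trans (hvx.2.2 ⊤ hh₀).2
    · exact (hh.2.2 t ht).2.trans (hvx.2.2 t ht).1.symm
  · exact above (fun t ht => (hh.1 t (ht.trans hgt)).symm) (hh.1 h₀ hgt).symm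

theorem IsLowBridge.top_ne_zero [NeZero p] {e x : Fin n → Fin p} (hx : IsLowBridge e x) :
    e ⊤ ≠ 0 := by
  obtain ⟨h, hh, hx, hlt⟩ := hx
  rw [hx.apply_top hh]
  exact ((Fin.zero_le _).trans_lt hlt).ne'

/-- The footprint pair `(s, u)` lies in the copy of `K_p` containing `e` (`e` ending in `0`), or on
the bridge whose lower end is `e`. -/
def Charged [NeZero p] (s u e : Fin n → Fin p) : Prop :=
  ((∀ t < ⊤, u t = s t) ∧ e = Function.update s ⊤ 0) ∨
    ∃ x, IsLowBridge e x ∧ s(s, u) = s(e, x)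

theorem exists_charged [NeZero p] {s u : Fin n → Fin p}
    (hu : u ∈ closedNbhd (sierpinskiGraph p n) s) :
    ∃ e, (e ⊤ = 0 ∨ ∃ x, IsLowBridge e x) ∧ Charged s u e := by
  by_cases hcopy : ∀ t < ⊤, u t = s t
  · exact ⟨_, Or.inl (Function.update_self ..), Or.inl ⟨hcopy, rfl⟩⟩
  obtain ⟨h, hh⟩ : ∃ h, AdjAt h u s :=
    (mem_closedNbhd_iff.1 hu).resolve_left fun he => hcopy fun t _ => by rw [he]
  have hlt : h < ⊤ := lt_top_iff_ne_top.2 fun htop => hcopy (htop ▸ hh.1)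
  rcases hh.2.1.lt_or_gt with hus | hsu
  · have hb : IsLowBridge u s := ⟨h, hlt, hh, hus⟩
    exact ⟨u, Or.inr ⟨s, hb⟩, Or.inr ⟨s, hb, Sym2.eq_swap⟩⟩
  · have hb : IsLowBridge s u := ⟨h, hlt, hh.symm, hsu⟩
    exact ⟨s, Or.inr ⟨u, hb⟩, Or.inr ⟨u, hb, rfl⟩⟩

theorem Charged.mem_closedNbhd [NeZero p] {s u s' u' e : Fin n → Fin p}
    (hu : u ∈ closedNbhd (sierpinskiGraph p n) s) (he : Charged s u e) (he' : Charged s' u' e) :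
    u' ∈ closedNbhd (sierpinskiGraph p n) s := by
  rcases he with ⟨-, rfl⟩ | ⟨x, hx, hsu⟩ <;>
    rcases he' with ⟨hcopy', he'⟩ | ⟨y, hy, hsu'⟩
  · refine mem_closedNbhd_of_forall_lt_top fun t ht => (hcopy' t ht).trans ?_
    simpa [Function.update_of_ne ht.ne] using (congrFun he' t).symm
  · exact absurd (Function.update_self ..) hy.top_ne_zero
  · exact absurd (he' ▸ Function.update_self ..) hx.top_ne_zero
  · obtain rfl := hx.unique hy
    rcases Sym2.mem_iff.1 (hsu ▸ hsu' ▸ Sym2.mem_mk_right s' u' : u' ∈ s(s, u)) with rfl | rfl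
    exacts [mem_closedNbhd_iff.2 (Or.inl rfl), hu]

end SierpinskiGraph

open SierpinskiGraph in
theorem sierpinski_lex_grundy_sequence (p n : ℕ) (hp : 1 ≤ p) (hn : 1 ≤ n)
    (l : List (Fin n → Fin p))
    (hmem : ∀ v : Fin n → Fin p, v ∈ l ↔ v ∈ sierpLexSet p n hn)
    (hsorted : l.Pairwise lexLt) :
    IsDomSeq (sierpinskiGraph p n) l ∧
    l.length = grundyDomNum (sierpinskiGraph p n) := by
  have : NeZero p := ⟨by omega⟩
  have : NeZero n := ⟨by omega⟩
  simp only [mem_sierpLexSet_iff] at hmem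
  have hlegal : IsLegalSeq (sierpinskiGraph p n) l :=
    isLegalSeq_of_pairwise lexLt_irrefl hsorted fun v hv =>
      ((hmem v).1 hv).elim exists_private_of_top_eq_zero fun ⟨_, hvx⟩ => hvx.exists_private
  have hdom : IsDomSeq (sierpinskiGraph p n) l :=
    ⟨hlegal, fun u => ⟨Function.update u ⊤ 0, (hmem _).2 (Or.inl (Function.update_self ..)),
      mem_closedNbhd_of_forall_lt_top fun t ht => (Function.update_of_ne ht.ne _ _).symm⟩⟩
  refine ⟨hdom, (grundyDomNum_eq_of_isDomSeq hdom fun s hs => ?_).symm⟩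
  calc s.length ≤ l.toFinset.card :=
        hs.length_le_card _ Charged
          (fun _ _ hu => (exists_charged hu).imp fun e ⟨heL, he⟩ =>
            ⟨List.mem_toFinset.2 ((hmem e).2 heL), he⟩)
          fun _ _ _ _ _ hu he he' => he.mem_closedNbhd hu he'
    _ = l.length := List.toFinset_card_of_nodup hlegal.1
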